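/- arXiv:2208.04304 — 6 statements merged into one kernel-verified Lean document; each statement's English description precedes it below -/
import Mathlib

section
/- Let z₀, z_k, z_{k+1} be points in the unit disc forming a triangle whose angle at z_{k+1} lies in [ε, π − ε], and let γ_h be the hyperbolic geodesic through z₀ and z_k in the Poincaré disc, realized as a circle with Euclidean center z_* and radius R orthogonal to the unit circle. If the central angle ∠z₀ z_* z_k < 2ε, then ∠z₀ z_{k+1} z_k > (1/2)∠z₀ z_* z_k and ∠z₀ z_{k+1} z_k < π − (1/2)∠z₀ z_* z_k, and consequently z_{k+1} lies on the side of γ_h not containing the 'inside' arc, i.e., z_{k+1} lies in the hyperbolic half-plane P_h = {z : arg((exp⁻¹_{z₀} z)/(exp⁻¹_{z₀} z_k)) ∈ (0, π)} whenever it lies in the Euclidean half-plane P = {z : arg((z − z₀)/(z_k − z₀)) ∈ (0, π)}. -/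
open Real EuclideanGeometry

/-- The direction (and, up to the positive scaling by hyperbolic distance, the
value) of the inverse exponential map `exp⁻¹_{z₀}(z)` of the Poincaré disc at
`z₀`, with `T_{z₀}𝔻` identified with `ℂ`: `exp⁻¹_{z₀}(z)` is a positive
multiple of `v = (z − z₀)/(1 − conj z₀ · z)`, hence has the same argument. -/
noncomputable def expInvDir (z0 z : ℂ) : ℂ :=
  (z - z0) / (1 - (starRingEnd ℂ) z0 * z)

/-!
The two angle bounds are immediate from `ε ≤ θ ≤ π - ε` and `α < 2ε`. For the half-planes, the
disc automorphism `z ↦ (z - z₀) / (1 - conj z₀ z)` maps the geodesic circle `γ_h` onto a line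
through `0`, so `z` lies in `P_h` exactly when `Im (conj z₀ z_k)` and the power of `z` with
respect to `γ_h` have the same sign. Since `γ_h` is orthogonal to the unit circle, the chord
`[z₀, z_k]` separates the centre `z_*` from the origin. Finally, by the inscribed angle theorem
the chord is seen from `γ_h` under the angle `α/2` on the side of `z_*` and `π - α/2` on the other
side, so a point of `P` seeing it under an angle strictly in between lies inside `γ_h` exactly
when `z_*` is on its side of the chord.
-/

open ComplexConjugate

namespace Complex

theorem arg_mem_Ioo_zero_pi_iff {z : ℂ} : arg z ∈ Set.Ioo 0 π ↔ 0 < z.im := by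
  constructor
  · rintro ⟨h0, hπ⟩
    have hz : z ≠ 0 := by rintro rfl; simp at h0
    rw [← norm_mul_sin_arg]
    exact mul_pos (norm_pos_iff.mpr hz) (Real.sin_pos_of_pos_of_lt_pi h0 hπ)
  · intro h
    refine ⟨(arg_nonneg_iff.mpr h.le).lt_of_ne fun h0 => ?_, arg_lt_pi_iff.mpr (Or.inr h.ne')⟩
    rw [← norm_mul_sin_arg, ← h0, Real.sin_zero, mul_zero] at h
    exact h.false

theorem arg_div_mem_Ioo_zero_pi_iff (z w : ℂ) :
    arg (z / w) ∈ Set.Ioo 0 π ↔ 0 < (conj w * z).im := by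
  rw [arg_mem_Ioo_zero_pi_iff, div_im, ← sub_div]
  rcases eq_or_ne w 0 with rfl | hw
  · simp
  · rw [div_pos_iff_of_pos_right (normSq_pos.mpr hw), mul_im, conj_re, conj_im]
    ring_nf

theorem sq_dist_eq_re_im (z w : ℂ) : dist z w ^ 2 = (z.re - w.re) ^ 2 + (z.im - w.im) ^ 2 := by
  rw [dist_eq_re_im, sq_sqrt (by positivity)]

theorem sq_norm_mul_sq_norm (z w : ℂ) :
    ‖z‖ ^ 2 * ‖w‖ ^ 2 = (conj z * w).re ^ 2 + (conj z * w).im ^ 2 := by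
  rw [← mul_pow, ← norm_conj z, ← norm_mul, Complex.sq_norm, normSq_apply]
  ring

end Complex

theorem mul_pos_of_mul_neg_of_mul_neg {α : Type*} [CommRing α] [LinearOrder α]
    [IsStrictOrderedRing α] {a b c : α} (ha : a * c < 0) (hb : b * c < 0) : 0 < a * b := by
  have h := mul_pos_of_neg_of_neg ha hb
  rw [show a * c * (b * c) = a * b * c ^ 2 by ring] at h
  exact pos_of_mul_pos_left h (sq_nonneg c)

theorem Real.cos_sq_lt_cos_sq_of_lt_of_lt_pi_sub {β θ : ℝ} (hβ : 0 ≤ β) (hθ : θ ≤ π)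
    (h₁ : β < θ) (h₂ : θ < π - β) : cos θ ^ 2 < cos β ^ 2 := by
  have hlt : cos θ < cos β := cos_lt_cos_of_nonneg_of_le_pi hβ hθ h₁
  have hgt : cos (π - β) < cos θ := cos_lt_cos_of_nonneg_of_le_pi (by linarith) (by linarith) h₂
  rw [cos_pi_sub] at hgt
  exact sq_lt_sq' (by linarith) hlt

theorem EuclideanGeometry.Sphere.four_mul_sq_radius_mul_cos_sq_half_angle {V P : Type*}
    [NormedAddCommGroup V] [InnerProductSpace ℝ V] [MetricSpace P] [NormedAddTorsor V P]
    {s : Sphere P} {a b : P} (ha : a ∈ s) (hb : b ∈ s) :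
    4 * s.radius ^ 2 * cos (∠ a s.center b / 2) ^ 2 = 4 * s.radius ^ 2 - dist a b ^ 2 := by
  have hlaw := dist_sq_eq_dist_sq_add_dist_sq_sub_two_mul_dist_mul_dist_mul_cos_angle a s.center b
  rw [mem_sphere.mp ha, mem_sphere.mp hb] at hlaw
  rw [cos_sq, mul_div_cancel₀ _ two_ne_zero]
  linear_combination hlaw

namespace EuclideanGeometry.Sphere

variable {s : Sphere ℂ} {a b : ℂ}

theorem sq_radius_eq_re_im (ha : a ∈ s) :
    s.radius ^ 2 = (a.re - s.center.re) ^ 2 + (a.im - s.center.im) ^ 2 := by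
  rw [← mem_sphere.mp ha, Complex.sq_dist_eq_re_im]

theorem two_mul_re_conj_mul_center_eq (ha : a ∈ s) (hb : b ∈ s) :
    2 * (conj (b - a) * (s.center - a)).re = dist a b ^ 2 := by
  simp only [Complex.mul_re, Complex.conj_re, Complex.conj_im, Complex.sub_re, Complex.sub_im]
  linear_combination sq_radius_eq_re_im hb - sq_radius_eq_re_im ha - Complex.sq_dist_eq_re_im a b

theorem four_mul_sq_im_conj_mul_center_eq (ha : a ∈ s) (hb : b ∈ s) :
    4 * (conj (b - a) * (s.center - a)).im ^ 2
      = dist a b ^ 2 * (4 * s.radius ^ 2 - dist a b ^ 2) := by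
  have h := Complex.sq_norm_mul_sq_norm (b - a) (s.center - a)
  rw [← dist_eq_norm, ← dist_eq_norm, dist_comm b, mem_sphere'.mp ha] at h
  linear_combination -4 * h - (dist a b ^ 2 + 2 * (conj (b - a) * (s.center - a)).re) *
    two_mul_re_conj_mul_center_eq ha hb

theorem dist_sq_mul_power_eq (ha : a ∈ s) (hb : b ∈ s) (u : ℂ) :
    dist a b ^ 2 * s.power u = dist a b ^ 2 * (conj (a - u) * (b - u)).re
      - 2 * (conj (b - a) * (u - a)).im * (conj (b - a) * (s.center - a)).im := by
  have hρ := two_mul_re_conj_mul_center_eq ha hb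
  rw [Complex.sq_dist_eq_re_im a b] at hρ
  rw [Sphere.power, Complex.sq_dist_eq_re_im u, Complex.sq_dist_eq_re_im a b]
  simp only [Complex.mul_re, Complex.mul_im, Complex.conj_re, Complex.conj_im, Complex.sub_re,
    Complex.sub_im] at hρ ⊢
  linear_combination (-((a.re - b.re) ^ 2 + (a.im - b.im) ^ 2)) * sq_radius_eq_re_im ha
    - ((b.re - a.re) * (u.re - a.re) + (b.im - a.im) * (u.im - a.im)) * hρ

theorem dist_sq_mul_sq_re_lt_of_inscribed_angle (ha : a ∈ s) (hb : b ∈ s) (hr : 0 < s.radius)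
    {u : ℂ} (hua : u ≠ a) (hub : u ≠ b)
    (h₁ : ∠ a s.center b / 2 < ∠ a u b) (h₂ : ∠ a u b < π - ∠ a s.center b / 2) :
    dist a b ^ 2 * (conj (a - u) * (b - u)).re ^ 2
      < (4 * s.radius ^ 2 - dist a b ^ 2) * (conj (b - a) * (u - a)).im ^ 2 := by
  have hcos_lt := Real.cos_sq_lt_cos_sq_of_lt_of_lt_pi_sub
    (by linarith [angle_nonneg a s.center b]) (angle_le_pi _ _ _) h₁ h₂
  have hcos : cos (∠ a u b) * (‖a - u‖ * ‖b - u‖) = (conj (a - u) * (b - u)).re := by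
    have h := InnerProductGeometry.cos_angle_mul_norm_mul_norm (a - u) (b - u)
    rwa [Complex.inner, mul_comm (b - u)] at h
  have hlag : ‖a - u‖ ^ 2 * ‖b - u‖ ^ 2
      = (conj (a - u) * (b - u)).re ^ 2 + (conj (b - a) * (u - a)).im ^ 2 := by
    rw [Complex.sq_norm_mul_sq_norm]
    congr 2
    simp only [Complex.mul_im, Complex.conj_re, Complex.conj_im, Complex.sub_re, Complex.sub_im]
    ring
  have hN : 0 < 4 * s.radius ^ 2 * (‖a - u‖ ^ 2 * ‖b - u‖ ^ 2) := by
    have := sub_ne_zero.mpr hua.symm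
    have := sub_ne_zero.mpr hub.symm
    positivity
  have h := mul_lt_mul_of_pos_right hcos_lt hN
  rw [show cos (∠ a u b) ^ 2 * (4 * s.radius ^ 2 * (‖a - u‖ ^ 2 * ‖b - u‖ ^ 2))
      = 4 * s.radius ^ 2 * (conj (a - u) * (b - u)).re ^ 2 by rw [← hcos]; ring,
    show cos (∠ a s.center b / 2) ^ 2 * (4 * s.radius ^ 2 * (‖a - u‖ ^ 2 * ‖b - u‖ ^ 2))
      = (4 * s.radius ^ 2 - dist a b ^ 2) * (‖a - u‖ ^ 2 * ‖b - u‖ ^ 2) by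
        rw [← four_mul_sq_radius_mul_cos_sq_half_angle ha hb]; ring, hlag] at h
  linarith

/-- Inscribed angle theorem: a point left of the chord `a → b` seeing it under an angle strictly
between the two inscribed angles is inside `s` exactly when the centre is also left of it. -/
theorem power_mul_im_center_neg_of_inscribed_angle (ha : a ∈ s) (hb : b ∈ s)
    (hr : 0 < s.radius) {u : ℂ} (hu : 0 < (conj (b - a) * (u - a)).im)
    (h₁ : ∠ a s.center b / 2 < ∠ a u b) (h₂ : ∠ a u b < π - ∠ a s.center b / 2) :
    s.power u * (conj (b - a) * (s.center - a)).im < 0 := by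
  have hl : 0 < dist a b ^ 2 := pow_pos (dist_pos.mpr fun hab => by simp [hab] at hu) 2
  have hua : u ≠ a := by rintro rfl; simp at hu
  have hub : u ≠ b := by rintro rfl; simp [Complex.mul_im] at hu; linarith
  have hangle := dist_sq_mul_sq_re_lt_of_inscribed_angle ha hb hr hua hub h₁ h₂
  have hσ := four_mul_sq_im_conj_mul_center_eq ha hb
  have hpow := dist_sq_mul_power_eq ha hb u
  set d := (conj (a - u) * (b - u)).re
  set m := (conj (b - a) * (u - a)).im
  set σ := (conj (b - a) * (s.center - a)).im
  have habs : |dist a b ^ 2 * d| < |2 * m * σ| :=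
    sq_lt_sq.mp (by nlinarith [mul_lt_mul_of_pos_left hangle hl])
  have hσ0 : 0 < |σ| := by
    have := (abs_nonneg _).trans_lt habs
    rw [abs_mul, abs_of_pos (by positivity : 0 < 2 * m)] at this
    exact pos_of_mul_pos_right this (by positivity)
  have hkey : dist a b ^ 2 * d * σ < 2 * m * σ ^ 2 :=
    calc dist a b ^ 2 * d * σ ≤ |dist a b ^ 2 * d| * |σ| := by
          rw [← abs_mul]; exact le_abs_self _
      _ < |2 * m * σ| * |σ| := mul_lt_mul_of_pos_right habs hσ0
      _ = 2 * m * σ ^ 2 := by rw [← abs_mul, mul_assoc, ← sq, abs_of_nonneg (by positivity)]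
  refine neg_of_mul_neg_right ?_ hl.le
  calc dist a b ^ 2 * (s.power u * σ) = (dist a b ^ 2 * d - 2 * m * σ) * σ := by
        rw [← hpow]; ring
    _ < 0 := by linarith

/-- A chord inside the disc of a circle orthogonal to the unit circle separates its centre from
the origin (`(conj a * b).im` is the signed area of `(a, b, 0)`). -/
theorem im_conj_mul_mul_im_center_neg_of_orthogonal (hs : s.radius ^ 2 + 1 = ‖s.center‖ ^ 2)
    (ha : a ∈ s) (hb : b ∈ s) (ha₁ : ‖a‖ < 1) (hb₁ : ‖b‖ < 1) (hab : a ≠ b) :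
    (conj a * b).im * (conj (b - a) * (s.center - a)).im < 0 := by
  have hid : (conj a * b).im * (conj (b - a) * (s.center - a)).im
      = -(dist a b ^ 2 * (1 - (conj a * b).re)) / 2 := by
    rw [Complex.sq_norm, Complex.normSq_apply] at hs
    rw [Complex.sq_dist_eq_re_im]
    simp only [Complex.mul_re, Complex.mul_im, Complex.conj_re, Complex.conj_im, Complex.sub_re,
      Complex.sub_im]
    linear_combination
      (-(b.im ^ 2 + b.re ^ 2 - a.im * b.im - a.re * b.re) / 2) * sq_radius_eq_re_im ha
      + (-(-a.im * b.im + a.im ^ 2 - a.re * b.re + a.re ^ 2) / 2) * sq_radius_eq_re_im hb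
      - ((-b.im ^ 2 - b.re ^ 2 + 2 * a.im * b.im - a.im ^ 2 + 2 * a.re * b.re - a.re ^ 2) / 2) * hs
  have hre : (conj a * b).re < 1 := by
    refine (Complex.re_le_norm _).trans_lt ?_
    rw [norm_mul, Complex.norm_conj]
    nlinarith [norm_nonneg a, norm_nonneg b]
  have := mul_pos (pow_pos (dist_pos.mpr hab) 2) (sub_pos.mpr hre)
  linarith

/-- The disc automorphism `z ↦ (z - a) / (1 - conj a * z)` maps `s` onto the line through `0`
and the image of `b`; the left side tells on which side of that line the image of `u` lies.
The terms linear in `u` vanish on `a, b ∈ s` only after multiplication by `(conj a * b).im`,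
hence the cancellation. -/
theorem im_conj_mobius_mul_mobius_eq_of_orthogonal (hs : s.radius ^ 2 + 1 = ‖s.center‖ ^ 2)
    (ha : a ∈ s) (hb : b ∈ s) (hab : (conj a * b).im ≠ 0) (u : ℂ) :
    (conj ((b - a) * (1 - conj a * u)) * ((u - a) * (1 - conj a * b))).im
      = (1 - ‖a‖ ^ 2) * (conj a * b).im * s.power u := by
  refine mul_left_cancel₀ hab ?_
  have H1 := sq_radius_eq_re_im ha
  have H2 := sq_radius_eq_re_im hb
  rw [Complex.sq_norm, Complex.normSq_apply] at hs
  rw [Sphere.power, Complex.sq_dist_eq_re_im, Complex.sq_norm, Complex.normSq_apply]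
  simp only [Complex.mul_re, Complex.mul_im, Complex.conj_re, Complex.conj_im, Complex.sub_re,
    Complex.sub_im, Complex.one_re, Complex.one_im]
  linear_combination (1 - a.re ^ 2 - a.im ^ 2) * (a.re * b.im - a.im * b.re) *
    ((a.re * b.im - a.im * b.re) * hs
      - u.im * (a.re * (hs - H2) - b.re * (hs - H1))
      - u.re * (b.im * (hs - H1) - a.im * (hs - H2)))

theorem arg_expInvDir_div_mem_Ioo_iff (hs : s.radius ^ 2 + 1 = ‖s.center‖ ^ 2)
    (ha : a ∈ s) (hb : b ∈ s) (ha₁ : ‖a‖ < 1) (hab : (conj a * b).im ≠ 0) (u : ℂ) :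
    Complex.arg (expInvDir a u / expInvDir a b) ∈ Set.Ioo 0 π
      ↔ 0 < (conj a * b).im * s.power u := by
  have hquot : expInvDir a u / expInvDir a b
      = (u - a) * (1 - conj a * b) / ((b - a) * (1 - conj a * u)) := by
    rw [expInvDir, expInvDir, div_div_div_eq, mul_comm (1 - conj a * u)]
  have ha₂ : 0 < 1 - ‖a‖ ^ 2 := by nlinarith [norm_nonneg a]
  rw [hquot, Complex.arg_div_mem_Ioo_zero_pi_iff,
    im_conj_mobius_mul_mobius_eq_of_orthogonal hs ha hb hab, mul_assoc,
    mul_pos_iff_of_pos_left ha₂]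

end EuclideanGeometry.Sphere

open EuclideanGeometry.Sphere in
theorem stmt9_general (z0 zk zk1 zstar : ℂ) (R ε : ℝ) (hR : 0 < R)
    (hz0 : ‖z0‖ < 1) (hzk : ‖zk‖ < 1)
    (horth : R ^ 2 + 1 = ‖zstar‖ ^ 2)
    (hon0 : dist z0 zstar = R) (honk : dist zk zstar = R)
    (hangle1 : ε ≤ ∠ z0 zk1 zk) (hangle2 : ∠ z0 zk1 zk ≤ π - ε)
    (hcentral : ∠ z0 zstar zk < 2 * ε) :
    (∠ z0 zstar zk) / 2 < ∠ z0 zk1 zk ∧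
    ∠ z0 zk1 zk < π - (∠ z0 zstar zk) / 2 ∧
    (Complex.arg ((zk1 - z0) / (zk - z0)) ∈ Set.Ioo 0 π →
      Complex.arg (expInvDir z0 zk1 / expInvDir z0 zk) ∈ Set.Ioo 0 π) := by
  have h₁ : ∠ z0 zstar zk / 2 < ∠ z0 zk1 zk := by linarith
  have h₂ : ∠ z0 zk1 zk < π - ∠ z0 zstar zk / 2 := by linarith
  refine ⟨h₁, h₂, fun hside => ?_⟩
  let s : EuclideanGeometry.Sphere ℂ := ⟨zstar, R⟩
  have ha : z0 ∈ s := hon0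
  have hb : zk ∈ s := honk
  rw [Complex.arg_div_mem_Ioo_zero_pi_iff] at hside
  have hab : z0 ≠ zk := by rintro rfl; simp at hside
  have hsep := im_conj_mul_mul_im_center_neg_of_orthogonal horth ha hb hz0 hzk hab
  have hin := power_mul_im_center_neg_of_inscribed_angle ha hb hR hside h₁ h₂
  rw [arg_expInvDir_div_mem_Ioo_iff horth ha hb hz0 (left_ne_zero_of_mul hsep.ne)]
  exact mul_pos_of_mul_neg_of_mul_neg hsep hin

/-- Let `z₀, z_k, z_{k+1}` be points in the unit disc such that the
angle of the triangle at `z_{k+1}` lies in `[ε, π − ε]`, and let the hyperbolic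
geodesic through `z₀, z_k` be realized as a circle with Euclidean center `z_*`
and radius `R` orthogonal to the unit circle. If the central angle
`α = ∠ z₀ z_* z_k` is `< 2ε`, then `α/2 < ∠ z₀ z_{k+1} z_k < π − α/2`, and
consequently if `z_{k+1}` lies in the Euclidean half-plane
`P = {z : arg((z − z₀)/(z_k − z₀)) ∈ (0, π)}` then it lies in the hyperbolic
half-plane `P_h = {z : arg(exp⁻¹_{z₀}(z)/exp⁻¹_{z₀}(z_k)) ∈ (0, π)}`. -/
theorem stmt9 (z0 zk zk1 zstar : ℂ) (R ε : ℝ) (hR : 0 < R)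
    (hε : ε ∈ Set.Ioo 0 (π / 2))
    (hz0 : ‖z0‖ < 1) (hzk : ‖zk‖ < 1)
    (hzk1 : ‖zk1‖ < 1)
    (horth : R ^ 2 + 1 = ‖zstar‖ ^ 2)
    (hon0 : dist z0 zstar = R) (honk : dist zk zstar = R)
    (hangle1 : ε ≤ ∠ z0 zk1 zk) (hangle2 : ∠ z0 zk1 zk ≤ π - ε)
    (hcentral : ∠ z0 zstar zk < 2 * ε) :
    (∠ z0 zstar zk) / 2 < ∠ z0 zk1 zk ∧
    ∠ z0 zk1 zk < π - (∠ z0 zstar zk) / 2 ∧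
    (Complex.arg ((zk1 - z0) / (zk - z0)) ∈ Set.Ioo 0 π →
      Complex.arg (expInvDir z0 zk1 / expInvDir z0 zk) ∈ Set.Ioo 0 π) :=
  stmt9_general z0 zk zk1 zstar R ε hR hz0 hzk horth hon0 honk hangle1 hangle2 hcentral
end

section
/- For z₀ ∈ 𝔻 and z ∈ 𝔻, let v(z) = exp⁻¹_{z₀}(z) ∈ ℂ (identifying T_{z₀}𝔻 with ℂ by translating z₀ to the origin). Then arg(v(z)/(z − z₀)) ∈ (−π/2, π/2) for all z ∈ 𝔻, z ≠ z₀. -/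
open Real

/-- For `z₀, z ∈ 𝔻` with `z ≠ z₀`, the argument of
`exp⁻¹_{z₀}(z)/(z − z₀)` lies in `(−π/2, π/2)`. -/
theorem stmt10 (z0 z : ℂ) (hz0 : ‖z0‖ < 1) (hz : ‖z‖ < 1)
    (hne : z ≠ z0) :
    Complex.arg (expInvDir z0 z / (z - z0)) ∈ Set.Ioo (-(π / 2)) (π / 2) := by
  have habs : ‖(starRingEnd ℂ) z0 * z‖ < 1 := by
    rw [norm_mul, Complex.norm_conj]
    calc ‖z0‖ * ‖z‖ ≤ ‖z0‖ * 1 := by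
          exact mul_le_mul_of_nonneg_left hz.le (norm_nonneg _)
      _ < 1 := by simpa using hz0
  set w : ℂ := 1 - (starRingEnd ℂ) z0 * z with hw
  have hre : 0 < w.re := by
    have : |((starRingEnd ℂ) z0 * z).re| ≤ ‖(starRingEnd ℂ) z0 * z‖ :=
      Complex.abs_re_le_norm _
    have := (abs_le.mp this).2
    simp only [hw, Complex.sub_re, Complex.one_re]
    linarith
  have hwne : w ≠ 0 := fun h => by simp [h] at hre
  have hsub : z - z0 ≠ 0 := sub_ne_zero.mpr hne
  have heq : expInvDir z0 z / (z - z0) = w⁻¹ := by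
    field_simp [expInvDir, hwne]
    rw [expInvDir, ← hw]; exact div_mul_cancel₀ _ hwne
  rw [heq]
  have hrei : 0 < (w⁻¹).re := by
    rw [Complex.inv_re]
    exact div_pos hre (by
      have := Complex.normSq_pos.mpr hwne
      positivity)
  have := Complex.abs_arg_lt_pi_div_two_iff.mpr (Or.inl hrei)
  constructor <;> [linarith [abs_lt.mp this]; exact (abs_lt.mp this).2]
end

section
/- Let i₀ be a vertex of a triangulated region embedded by two geodesic embeddings φ, φ' into discs of radii r and 1 respectively, with conformal factor u (l' = u * l), and suppose both metrics satisfy the uniformly nondegenerate condition with constant ε. If there is an edge i₀j₀ with l'_{i₀j₀} ≥ (1 − |z'_{i₀}|²) sin ε, where z'_{i₀} = φ'(i₀) ∈ D_{1}, u_{i₀} = min u over vertices in the unit disc, |z_{i₀}| ≤ 1/2, l_{i₀j₀} ≤ 2r, and r = sin³ε/4, then e^{u^h_{i₀}} ≥ 1, where u^h_{i₀} = u_{i₀} + log((1−|z_{i₀}|²)/(1−|z'_{i₀}|²)). -/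
open Real EuclideanGeometry

/-!
Comparing the two triangles through the law of sines, nondegeneracy gives the gradient estimate
`e^{(u_{i₀} - u_{j₀})/2} ≥ sin² ε`. Hence
`e^{u_{i₀}} = (l'_{i₀j₀} / l_{i₀j₀}) e^{(u_{i₀} - u_{j₀})/2} ≥ (1 - |z'_{i₀}|²) sin³ ε / (2r) = 2 (1 - |z'_{i₀}|²)`,
and `1 - |z_{i₀}|² ≥ 3/4` finishes the estimate.
-/

theorem Real.sin_le_sin_of_le_of_le_pi_sub {ε θ : ℝ} (hε : -(π / 2) ≤ ε) (h₁ : ε ≤ θ)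
    (h₂ : θ ≤ π - ε) : sin ε ≤ sin θ := by
  rcases le_or_gt θ (π / 2) with hθ | hθ
  · exact sin_le_sin_of_le_of_le_pi_div_two hε hθ h₁
  · rw [← sin_pi_sub θ]
    exact sin_le_sin_of_le_of_le_pi_div_two hε (by linarith) (by linarith)

namespace EuclideanGeometry

variable {V P : Type*} [NormedAddCommGroup V] [InnerProductSpace ℝ V] [MetricSpace P]
  [NormedAddTorsor V P]

theorem sin_mul_dist_le_dist_of_le_angle {ε : ℝ} {a b c : P} (hε : 0 ≤ ε) (hab : a ≠ b)
    (ha : ε ≤ ∠ c a b) (hb : ε ≤ ∠ a b c) : sin ε * dist b c ≤ dist a c := by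
  have hsum := angle_add_angle_add_angle_eq_pi c hab.symm
  have hc := angle_nonneg b c a
  calc sin ε * dist b c ≤ sin (∠ a b c) * dist b c := by
        gcongr
        exact sin_le_sin_of_le_of_le_pi_sub (by linarith [pi_pos]) hb (by linarith)
    _ = sin (∠ c a b) * dist c a := law_sin a b c
    _ ≤ dist a c := by
        rw [dist_comm]
        exact mul_le_of_le_one_left dist_nonneg (sin_le_one _)

end EuclideanGeometry

theorem sq_le_exp_half_sub_of_conformal {s u₀ u₁ u₂ l₀₂ l₁₂ l'₀₂ l'₁₂ : ℝ} (hs : 0 ≤ s)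
    (hl₀₂ : 0 < l₀₂) (h₀₂ : l'₀₂ = exp ((u₀ + u₂) / 2) * l₀₂)
    (h₁₂ : l'₁₂ = exp ((u₁ + u₂) / 2) * l₁₂) (hl : s * l₀₂ ≤ l₁₂) (hl' : s * l'₁₂ ≤ l'₀₂) :
    s ^ 2 ≤ exp ((u₀ - u₁) / 2) := by
  have hsplit : exp ((u₀ + u₂) / 2) = exp ((u₀ - u₁) / 2) * exp ((u₁ + u₂) / 2) := by
    rw [← exp_add]; ring_nf
  have he := exp_pos ((u₁ + u₂) / 2)
  have key : s ^ 2 * (exp ((u₁ + u₂) / 2) * l₀₂) ≤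
      exp ((u₀ - u₁) / 2) * (exp ((u₁ + u₂) / 2) * l₀₂) :=
    calc s ^ 2 * (exp ((u₁ + u₂) / 2) * l₀₂)
        = s * exp ((u₁ + u₂) / 2) * (s * l₀₂) := by ring
      _ ≤ s * exp ((u₁ + u₂) / 2) * l₁₂ := by gcongr
      _ = s * l'₁₂ := by rw [h₁₂]; ring
      _ ≤ l'₀₂ := hl'
      _ = exp ((u₀ - u₁) / 2) * (exp ((u₁ + u₂) / 2) * l₀₂) := by rw [h₀₂, hsplit]; ring
  exact le_of_mul_le_mul_right key (by positivity)

theorem two_mul_le_exp_of_long_edge {s y u₀ u₁ l l' : ℝ} (hs : 0 < s) (hl' : y * s ≤ l')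
    (hl : l ≤ s ^ 3 / 2) (hconf : l' = exp ((u₀ + u₁) / 2) * l)
    (hgrad : s ^ 2 ≤ exp ((u₀ - u₁) / 2)) : 2 * y ≤ exp u₀ := by
  have hsplit : exp u₀ = exp ((u₀ + u₁) / 2) * exp ((u₀ - u₁) / 2) := by
    rw [← exp_add]; ring_nf
  have he := exp_pos ((u₀ + u₁) / 2)
  have hlong : 2 * y * s ≤ exp ((u₀ + u₁) / 2) * s ^ 2 * s :=
    calc 2 * y * s ≤ 2 * l' := by linarith
      _ ≤ 2 * (exp ((u₀ + u₁) / 2) * (s ^ 3 / 2)) := by rw [hconf]; gcongr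
      _ = exp ((u₀ + u₁) / 2) * s ^ 2 * s := by ring
  calc 2 * y ≤ exp ((u₀ + u₁) / 2) * s ^ 2 := le_of_mul_le_mul_right hlong hs
    _ ≤ exp u₀ := by rw [hsplit]; gcongr

theorem stmt15_general (ε r : ℝ) (hε : ε ∈ Set.Ioo 0 (π / 2))
    (hr : r = Real.sin ε ^ 3 / 4)
    (p q : Fin 3 → ℂ) (u : Fin 3 → ℝ)
    (hp : ∀ a b c : Fin 3, a ≠ b → b ≠ c → a ≠ c → ε ≤ ∠ (p a) (p b) (p c))
    (hq : ∀ a b c : Fin 3, a ≠ b → b ≠ c → a ≠ c → ε ≤ ∠ (q a) (q b) (q c))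
    (hconf : ∀ a b : Fin 3, a ≠ b →
      dist (q a) (q b) = Real.exp ((u a + u b) / 2) * dist (p a) (p b))
    (hq0 : ‖q 0‖ < 1)
    (hedge : (1 - ‖q 0‖ ^ 2) * Real.sin ε ≤ dist (q 0) (q 1))
    (hp0 : ‖p 0‖ ≤ 1 / 2)
    (hl : dist (p 0) (p 1) ≤ 2 * r) :
    1 ≤ Real.exp (u 0 +
      Real.log ((1 - ‖p 0‖ ^ 2) / (1 - ‖q 0‖ ^ 2))) := by
  obtain ⟨hε₀, hε₁⟩ := hε
  have hs : 0 < sin ε := sin_pos_of_pos_of_lt_pi hε₀ (by linarith [pi_pos])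
  have hY : 0 < 1 - ‖q 0‖ ^ 2 := by nlinarith [norm_nonneg (q 0)]
  have hX : 3 / 4 ≤ 1 - ‖p 0‖ ^ 2 := by nlinarith [norm_nonneg (p 0)]
  have hq01 : q 0 ≠ q 1 := dist_pos.1 (lt_of_lt_of_le (by positivity) hedge)
  have hp01 : p 0 ≠ p 1 := by
    rintro h
    exact hq01 (dist_eq_zero.1 (by rw [hconf 0 1 (by decide), h, dist_self, mul_zero]))
  have hp02 : p 0 ≠ p 2 := by
    rintro h
    have := hp 0 1 2 (by decide) (by decide) (by decide)
    rw [← h, angle_self_of_ne hp01] at this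
    linarith
  have hgrad : sin ε ^ 2 ≤ exp ((u 0 - u 1) / 2) :=
    sq_le_exp_half_sub_of_conformal hs.le (dist_pos.2 hp02) (hconf 0 2 (by decide))
      (hconf 1 2 (by decide))
      (sin_mul_dist_le_dist_of_le_angle hε₀.le hp01.symm (hp 2 1 0 (by decide) (by decide)
        (by decide)) (hp 1 0 2 (by decide) (by decide) (by decide)))
      (sin_mul_dist_le_dist_of_le_angle hε₀.le hq01 (hq 2 0 1 (by decide) (by decide)
        (by decide)) (hq 0 1 2 (by decide) (by decide) (by decide)))
  have hu₀ : 2 * (1 - ‖q 0‖ ^ 2) ≤ exp (u 0) :=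
    two_mul_le_exp_of_long_edge hs hedge (by linarith) (hconf 0 1 (by decide)) hgrad
  rw [exp_add, exp_log (by positivity), mul_div_assoc', one_le_div hY]
  nlinarith

/-- interior long-edge estimate, case (2) in the key estimate:
let `i₀ = 0`, `j₀ = 1`, `k₀ = 2` be the vertices of a triangle of the two
geodesic embeddings `φ` (vertex positions `p`) and `φ'` (vertex positions `q`),
both satisfying the uniformly nondegenerate condition with constant `ε`, with
conformal factor `u` (`dist (q a) (q b) = e^{(u a + u b)/2} dist (p a) (p b)`).
If the edge `i₀j₀` satisfies `l'_{i₀j₀} ≥ (1 − |z'_{i₀}|²) sin ε`, `u_{i₀}` is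
minimal (in particular `u_{i₀} ≤ u_{j₀}`), `|z_{i₀}| ≤ 1/2`, `l_{i₀j₀} ≤ 2r`
and `r = sin³ε/4`, then `e^{u^h_{i₀}} ≥ 1`, where
`u^h_{i₀} = u_{i₀} + log((1 − |z_{i₀}|²)/(1 − |z'_{i₀}|²))`. -/
theorem stmt15 (ε r : ℝ) (hε : ε ∈ Set.Ioo 0 (π / 2))
    (hr : r = Real.sin ε ^ 3 / 4)
    (p q : Fin 3 → ℂ) (u : Fin 3 → ℝ)
    (hp : ∀ a b c : Fin 3, a ≠ b → b ≠ c → a ≠ c → ε ≤ ∠ (p a) (p b) (p c))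
    (hq : ∀ a b c : Fin 3, a ≠ b → b ≠ c → a ≠ c → ε ≤ ∠ (q a) (q b) (q c))
    (hconf : ∀ a b : Fin 3, a ≠ b →
      dist (q a) (q b) = Real.exp ((u a + u b) / 2) * dist (p a) (p b))
    (hq0 : ‖q 0‖ < 1)
    (hedge : (1 - ‖q 0‖ ^ 2) * Real.sin ε ≤ dist (q 0) (q 1))
    (hmin : u 0 ≤ u 1)
    (hp0 : ‖p 0‖ ≤ 1 / 2)
    (hl : dist (p 0) (p 1) ≤ 2 * r) :
    1 ≤ Real.exp (u 0 +
      Real.log ((1 - ‖p 0‖ ^ 2) / (1 - ‖q 0‖ ^ 2))) :=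
  stmt15_general ε r hε hr p q u hp hq hconf hq0 hedge hp0 hl
end

section
/- Sum of argument increments around a star: let z₀ ∈ ℂ and z₁, …, z_m be points (m ≥ 3, z_{m+1} = z₁) arranged so that arg((z_{k+1} − z₀)/(z_k − z₀)) ∈ (0, π) for each k and the total winding Σ_{k=1}^m arg((z_{k+1} − z₀)/(z_k − z₀)) = 2π. Suppose v: {z₁,…,z_m} → ℂ \ {0} is a map with arg(v(z_k)/(z_k − z₀)) ∈ (−π/2, π/2) for all k and arg(v(z_{k+1})/v(z_k)) ∈ (0, π) for all k. Then Σ_{k=1}^m arg(v(z_{k+1})/v(z_k)) = 2π. -/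
open Real

/-- sum of argument increments around a star: let `z₀ ∈ ℂ` and
`z 1, …, z m` (cyclically indexed, `m ≥ 3`) satisfy
`arg((z_{k+1} − z₀)/(z_k − z₀)) ∈ (0, π)` for each `k` with total winding `2π`.
If `v k ≠ 0`, `arg(v k/(z_k − z₀)) ∈ (−π/2, π/2)` and
`arg(v_{k+1}/v_k) ∈ (0, π)` for all `k`, then
`Σ_k arg(v_{k+1}/v_k) = 2π`. -/
theorem stmt16 {m : ℕ} [NeZero m] (hm : 3 ≤ m) (z0 : ℂ) (z v : Fin m → ℂ)
    (hz : ∀ k : Fin m, Complex.arg ((z (k + 1) - z0) / (z k - z0)) ∈ Set.Ioo 0 π)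
    (hwind : ∑ k : Fin m, Complex.arg ((z (k + 1) - z0) / (z k - z0)) = 2 * π)
    (hv0 : ∀ k : Fin m, v k ≠ 0)
    (hvdir : ∀ k : Fin m,
      Complex.arg (v k / (z k - z0)) ∈ Set.Ioo (-(π / 2)) (π / 2))
    (hvturn : ∀ k : Fin m, Complex.arg (v (k + 1) / v k) ∈ Set.Ioo 0 π) :
    ∑ k : Fin m, Complex.arg (v (k + 1) / v k) = 2 * π := by
  have hzne : ∀ k : Fin m, z k - z0 ≠ 0 := by
    intro k hk
    have := (hz k).1
    rw [hk, div_zero, Complex.arg_zero] at this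
    exact lt_irrefl 0 this
  -- key pointwise identity
  have key : ∀ k : Fin m, Complex.arg (v (k + 1) / v k) =
      Complex.arg ((z (k + 1) - z0) / (z k - z0))
      + Complex.arg (v (k + 1) / (z (k + 1) - z0))
      - Complex.arg (v k / (z k - z0)) := by
    intro k
    have h1 : v (k + 1) / v k * (v k / (z k - z0)) = v (k + 1) / (z k - z0) := by
      rw [div_mul_div_comm, mul_comm (v (k + 1)), mul_div_mul_left _ _ (hv0 k)]
    have h2 : (z (k + 1) - z0) / (z k - z0) * (v (k + 1) / (z (k + 1) - z0))
        = v (k + 1) / (z k - z0) := by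
      rw [div_mul_div_comm, mul_comm (z k - z0), mul_div_mul_left _ _ (hzne (k + 1))]
    have n1 : v (k + 1) / v k ≠ 0 := div_ne_zero (hv0 _) (hv0 _)
    have n2 : v k / (z k - z0) ≠ 0 := div_ne_zero (hv0 _) (hzne _)
    have n3 : (z (k + 1) - z0) / (z k - z0) ≠ 0 := div_ne_zero (hzne _) (hzne _)
    have n4 : v (k + 1) / (z (k + 1) - z0) ≠ 0 := div_ne_zero (hv0 _) (hzne _)
    have hang : ((Complex.arg (v (k + 1) / v k) + Complex.arg (v k / (z k - z0)) : ℝ) : Real.Angle)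
        = ((Complex.arg ((z (k + 1) - z0) / (z k - z0))
            + Complex.arg (v (k + 1) / (z (k + 1) - z0)) : ℝ) : Real.Angle) := by
      rw [Real.Angle.coe_add, Real.Angle.coe_add,
        ← Complex.arg_mul_coe_angle n1 n2, ← Complex.arg_mul_coe_angle n3 n4, h1, h2]
    rw [Real.Angle.angle_eq_iff_two_pi_dvd_sub] at hang
    obtain ⟨n, hn⟩ := hang
    have hb1 := hvturn k
    have hb2 := hvdir k
    have hb3 := hz k
    have hb4 := hvdir (k + 1)
    have hπ := Real.pi_pos
    have hbound : |(2 * π * (n : ℝ))| < 2 * π := by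
      rw [← hn, abs_lt]
      constructor <;> simp only [Set.mem_Ioo] at hb1 hb2 hb3 hb4 <;> nlinarith [hb1.1, hb1.2, hb2.1, hb2.2, hb3.1, hb3.2, hb4.1, hb4.2]
    have hn0 : n = 0 := by
      by_contra h0
      have : (1 : ℝ) ≤ |(n : ℝ)| := by
        exact_mod_cast Int.one_le_abs (by exact_mod_cast h0)
      rw [abs_mul] at hbound
      nlinarith [abs_nonneg ((n:ℝ)), abs_of_pos (show (0:ℝ) < 2*π by linarith)]
    rw [hn0] at hn
    push_cast at hn
    linarith
  rw [Finset.sum_congr rfl (fun k _ => key k)]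
  rw [Finset.sum_sub_distrib, Finset.sum_add_distrib, hwind]
  have hperm : ∑ k : Fin m, Complex.arg (v (k + 1) / (z (k + 1) - z0))
      = ∑ k : Fin m, Complex.arg (v k / (z k - z0)) := by
    exact Fintype.sum_equiv (Equiv.addRight (1 : Fin m)) _ _ (fun k => rfl)
  rw [hperm]
  ring
end

section
/- In a Euclidean triangle inscribed with two vertices z₀, z_k on a circle of center z_* and radius R, and third vertex z_{k+1}, if the angle at z_{k+1} satisfies ε ≤ ∠z₀z_{k+1}z_k ≤ π − ε and the central angle satisfies ∠z₀z_*z_k < 2ε, then (1/2)∠z₀z_*z_k < ∠z₀z_{k+1}z_k < π − (1/2)∠z₀z_*z_k; consequently z_{k+1} lies strictly outside the closed disc bounded by the circle on the major-arc side, i.e., z_{k+1} is not inside the circle and not on the minor arc side of the chord z₀z_k. -/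
/-!
Write θ = ∠ z₀ z_{k+1} z_k and γ = ∠ z₀ z_* z_k. The two inequalities are immediate from
ε ≤ θ ≤ π - ε and γ < 2ε. For the last claim, a point X inside the circle and on the opposite
side of the chord from the centre sees the chord under an angle larger than π - γ/2,
contradicting θ < π - γ/2. To see this, let m be the midpoint of the chord, v = z_k - m and
n = m - z_*, so that v ⊥ n, R² = |v|² + |n|², cos (γ/2) R = |n|, and X - m = α v + r n with
r > 0 because X and z_* lie on opposite sides. The claim cos θ < -cos (γ/2) then becomes a
polynomial inequality in α, r, |v|², |n|².
-/

open Real EuclideanGeometry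

open scoped RealInnerProductSpace

theorem AffineSubspace.SOppSide.exists_pos_vsub_sub_smul_mem_direction {R V P : Type*}
    [Field R] [LinearOrder R] [IsStrictOrderedRing R] [AddCommGroup V] [Module R V]
    [AddTorsor V P] {s : AffineSubspace R P} {x y m : P} (h : s.SOppSide x y) (hm : m ∈ s) :
    ∃ r : R, 0 < r ∧ x -ᵥ m - r • (m -ᵥ y) ∈ s.direction := by
  obtain ⟨hx, hy, p, hp, hray⟩ := (sOppSide_iff_exists_left hm).1 h
  have hxm : x -ᵥ m ≠ 0 := vsub_ne_zero.2 fun h ↦ hx (h ▸ hm)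
  have hpy : p -ᵥ y ≠ 0 := vsub_ne_zero.2 fun h ↦ hy (h ▸ hp)
  obtain ⟨r₁, r₂, hr₁, hr₂, hr⟩ := hray.exists_pos hxm hpy
  refine ⟨r₂ / r₁, div_pos hr₂ hr₁, ?_⟩
  have : x -ᵥ m - (r₂ / r₁) • (m -ᵥ y) = (r₂ / r₁) • (p -ᵥ m) := by
    rw [← vsub_add_vsub_cancel p m y] at hr
    rw [div_eq_inv_mul, mul_smul, mul_smul, (eq_inv_smul_iff₀ hr₁.ne').2 hr, smul_add]
    module
  rw [this]
  exact s.direction.smul_mem _ (vsub_mem_direction hp hm)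

section Euclidean

variable {V P : Type*} [NormedAddCommGroup V] [InnerProductSpace ℝ V] [MetricSpace P]
  [NormedAddTorsor V P]

theorem EuclideanGeometry.cos_angle_div_two_mul_dist {A B O : P} (h : dist A O = dist B O) :
    cos (∠ A O B / 2) * dist A O = dist (midpoint ℝ A B) O := by
  have hmedian := dist_sq_add_dist_sq_eq_two_mul_dist_midpoint_sq_add_half_dist_sq O A B
  have hcos := dist_sq_eq_dist_sq_add_dist_sq_sub_two_mul_dist_mul_dist_mul_cos_angle A O B
  have hhalf : cos (∠ A O B) = 2 * cos (∠ A O B / 2) ^ 2 - 1 := by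
    rw [cos_sq, mul_div_cancel₀ _ two_ne_zero]; ring
  have hnonneg : 0 ≤ cos (∠ A O B / 2) := by
    apply cos_nonneg_of_mem_Icc
    constructor <;> linarith [angle_nonneg A O B, angle_le_pi A O B]
  refine (pow_left_inj₀ (by positivity) dist_nonneg two_ne_zero).1 ?_
  rw [dist_comm O A, dist_comm O B, ← h, dist_comm O (midpoint ℝ A B)] at hmedian
  rw [← h, hhalf] at hcos
  linear_combination hmedian / 2 + hcos / 4

theorem norm_smul_add_smul_sq_of_inner_eq_zero {v n : V} (hvn : ⟪v, n⟫ = 0) (a b : ℝ) :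
    ‖a • v + b • n‖ ^ 2 = a ^ 2 * ‖v‖ ^ 2 + b ^ 2 * ‖n‖ ^ 2 := by
  rw [norm_add_sq_real, inner_smul_left, inner_smul_right, hvn, norm_smul, norm_smul,
    mul_pow, mul_pow, Real.norm_eq_abs, Real.norm_eq_abs, sq_abs, sq_abs]
  simp

theorem norm_mul_norm_add_mul_norm_sub_lt_of_inner_eq_zero {v n p : V} {α r R : ℝ}
    (hvn : ⟪v, n⟫ = 0) (hp : p = α • v + r • n) (hr : 0 < r) (hR : R ^ 2 = ‖v‖ ^ 2 + ‖n‖ ^ 2)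
    (hin : ‖p + n‖ < R) :
    ‖n‖ * (‖v + p‖ * ‖v - p‖) < (‖v‖ ^ 2 - ‖p‖ ^ 2) * R := by
  have hsq (a b : ℝ) := norm_smul_add_smul_sq_of_inner_eq_zero hvn a b
  have hplus : ‖v + p‖ ^ 2 = (1 + α) ^ 2 * ‖v‖ ^ 2 + r ^ 2 * ‖n‖ ^ 2 := by
    rw [← hsq, hp]; congr 2; module
  have hminus : ‖v - p‖ ^ 2 = (1 - α) ^ 2 * ‖v‖ ^ 2 + r ^ 2 * ‖n‖ ^ 2 := by
    rw [← neg_sq r, ← hsq, hp]; congr 2; module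
  have hcenter : ‖p + n‖ ^ 2 = α ^ 2 * ‖v‖ ^ 2 + (r + 1) ^ 2 * ‖n‖ ^ 2 := by
    rw [← hsq, hp]; congr 2; module
  have hpn : ‖p‖ ^ 2 = α ^ 2 * ‖v‖ ^ 2 + r ^ 2 * ‖n‖ ^ 2 := by rw [hp, hsq]
  set S := ‖v‖ ^ 2
  set N := ‖n‖ ^ 2
  set D := ‖v‖ ^ 2 - ‖p‖ ^ 2
  have hR0 : 0 ≤ R := (norm_nonneg _).trans hin.le
  have hrN : 0 ≤ 2 * r * N := by positivity
  have hD : 2 * r * N < D := by nlinarith [sq_lt_sq' (by linarith [norm_nonneg (p + n)]) hin]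
  have hS : 0 < S := by nlinarith
  -- the difference of the squares of the two sides factors as `S (D - 2rN) (D + 2rN)`
  have key : N * (‖v + p‖ ^ 2 * ‖v - p‖ ^ 2) < (D * R) ^ 2 := by
    have hDdef : D = (1 - α ^ 2) * S - r ^ 2 * N := by simp only [D, hpn]; ring
    rw [hplus, hminus, mul_pow, hR]
    have := mul_pos hS (mul_pos (sub_pos.2 hD) (by linarith : 0 < D + 2 * r * N))
    rw [hDdef] at this ⊢
    linarith
  refine lt_of_pow_lt_pow_left₀ 2 (mul_nonneg (by linarith) hR0) ?_
  rwa [mul_pow, mul_pow]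

theorem EuclideanGeometry.pi_sub_angle_div_two_lt_angle_of_sOppSide {A B O X : P} {R : ℝ}
    (hA : dist A O = R) (hB : dist B O = R) (hX : dist X O < R)
    (hside : line[ℝ, A, B].SOppSide X O) :
    π - ∠ A O B / 2 < ∠ A X B := by
  have hv : B -ᵥ A = (2 : ℝ) • (B -ᵥ midpoint ℝ A B) := by
    rw [right_vsub_midpoint, smul_smul]; norm_num
  have hm : midpoint ℝ A B ∈ line[ℝ, A, B] := AffineMap.lineMap_mem_affineSpan_pair _ _ _
  set m := midpoint ℝ A B
  set v := B -ᵥ m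
  set n := m -ᵥ O
  set p := X -ᵥ m
  have hvn : ⟪v, n⟫ = 0 := by
    have := inner_vsub_vsub_of_dist_eq_of_dist_eq (c₁ := O) (c₂ := m) (hA.trans hB.symm)
      (by rw [dist_left_midpoint, dist_right_midpoint])
    rw [hv, inner_smul_right, real_inner_comm] at this
    simpa using this
  obtain ⟨r, hr, hdir⟩ := hside.exists_pos_vsub_sub_smul_mem_direction hm
  rw [direction_affineSpan, vectorSpan_pair_rev, Submodule.mem_span_singleton] at hdir
  obtain ⟨c, hc⟩ := hdir
  have hp : p = (2 * c) • v + r • n := by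
    rw [mul_smul, smul_comm, ← hv, hc]; abel
  have hAX : A -ᵥ X = -(v + p) := by
    rw [← vsub_sub_vsub_cancel_right A X m, left_vsub_midpoint, ← neg_vsub_eq_vsub_rev B A,
      smul_neg, ← right_vsub_midpoint]; abel
  have hBX : B -ᵥ X = v - p := (vsub_sub_vsub_cancel_right B X m).symm
  have hR : R ^ 2 = ‖v‖ ^ 2 + ‖n‖ ^ 2 := by
    rw [← hB, dist_eq_norm_vsub V, ← vsub_add_vsub_cancel B m O, norm_add_sq_real, hvn]; ring
  have hin : ‖p + n‖ < R := by rwa [vsub_add_vsub_cancel, ← dist_eq_norm_vsub]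
  have hcore := norm_mul_norm_add_mul_norm_sub_lt_of_inner_eq_zero hvn hp hr hR hin
  have hhalf : cos (∠ A O B / 2) * R = ‖n‖ := by
    rw [← hA, cos_angle_div_two_mul_dist (hA.trans hB.symm), dist_eq_norm_vsub]
  have hinscribed : cos (∠ A X B) * (‖v + p‖ * ‖v - p‖) = -(‖v‖ ^ 2 - ‖p‖ ^ 2) := by
    have := InnerProductGeometry.cos_angle_mul_norm_mul_norm (A -ᵥ X) (B -ᵥ X)
    rw [hAX, hBX, norm_neg, inner_neg_left, inner_add_left, inner_sub_right, inner_sub_right,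
      real_inner_self_eq_norm_sq, real_inner_self_eq_norm_sq, real_inner_comm p v] at this
    rw [angle, hAX, hBX, this]; ring
  have hcos : cos (∠ A X B) < cos (π - ∠ A O B / 2) := by
    rw [cos_pi_sub]
    refine lt_of_mul_lt_mul_right (a := R * (‖v + p‖ * ‖v - p‖)) ?_ ?_
    · linear_combination hcore + R * hinscribed + (‖v + p‖ * ‖v - p‖) * hhalf
    · exact mul_nonneg (dist_nonneg.trans hX.le) (by positivity)
  refine (strictAntiOn_cos.lt_iff_gt ⟨?_, ?_⟩ ⟨?_, ?_⟩).1 hcos <;>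
    linarith [angle_nonneg A O B, angle_le_pi A O B, angle_nonneg A X B, angle_le_pi A X B]

end Euclidean

theorem stmt17_general (z0 zk zk1 zstar : ℂ) (R ε : ℝ)
    (hon0 : dist z0 zstar = R) (honk : dist zk zstar = R)
    (hangle1 : ε ≤ ∠ z0 zk1 zk) (hangle2 : ∠ z0 zk1 zk ≤ π - ε)
    (hcentral : ∠ z0 zstar zk < 2 * ε) :
    (∠ z0 zstar zk) / 2 < ∠ z0 zk1 zk ∧
    ∠ z0 zk1 zk < π - (∠ z0 zstar zk) / 2 ∧
    ¬(dist zk1 zstar < R ∧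
        (affineSpan ℝ ({z0, zk} : Set ℂ)).SOppSide zk1 zstar) := by
  refine ⟨by linarith, by linarith, fun ⟨hin, hside⟩ ↦ ?_⟩
  have := pi_sub_angle_div_two_lt_angle_of_sOppSide hon0 honk hin hside
  linarith

/-- inscribed angle estimate: let `z₀, z_k` lie on the circle of
center `z_*` and radius `R`, and let `z_{k+1}` be a third point. If the angle at
`z_{k+1}` satisfies `ε ≤ ∠ z₀ z_{k+1} z_k ≤ π − ε` and the central angle
satisfies `∠ z₀ z_* z_k < 2ε`, then
`(1/2)∠ z₀ z_* z_k < ∠ z₀ z_{k+1} z_k < π − (1/2)∠ z₀ z_* z_k`; consequently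
`z_{k+1}` does not lie in the open lens cut off from the open disc by the chord
`z₀ z_k` on the minor-arc side, i.e. it is not simultaneously inside the circle
and strictly on the opposite side of the chord line from `z_*`. -/
theorem stmt17 (z0 zk zk1 zstar : ℂ) (R ε : ℝ) (hR : 0 < R)
    (hε : ε ∈ Set.Ioo 0 (π / 2))
    (hon0 : dist z0 zstar = R) (honk : dist zk zstar = R) (hne : z0 ≠ zk)
    (hangle1 : ε ≤ ∠ z0 zk1 zk) (hangle2 : ∠ z0 zk1 zk ≤ π - ε)
    (hcentral : ∠ z0 zstar zk < 2 * ε) :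
    (∠ z0 zstar zk) / 2 < ∠ z0 zk1 zk ∧
    ∠ z0 zk1 zk < π - (∠ z0 zstar zk) / 2 ∧
    ¬(dist zk1 zstar < R ∧
        (affineSpan ℝ ({z0, zk} : Set ℂ)).SOppSide zk1 zstar) :=
  stmt17_general z0 zk zk1 zstar R ε hon0 honk hangle1 hangle2 hcentral
end

section
/- Boundary vertex estimate: let i₀ be a vertex with φ'(i₀) = z'_{i₀} ∈ D₁ having a neighbor j₁ with |φ'(j₁)| ≥ 1, so l'_{i₀j₁} ≥ 1 − |z'_{i₀}|. If both PL metrics on the triangle containing edge i₀j₁ satisfy the uniformly nondegenerate condition with constant ε (so the gradient estimate e^{(u_{i₀}−u_{j₁})/2} ≥ sin²ε holds when u_{i₀} ≤ u_{j₁}), sin ε ≤ 1/2, |z_{i₀}| ≤ 1/2, l_{i₀j₁} ≤ 2r with r = sin³ε/4, and u_{i₀} ≤ u_{j₁}, then e^{u^h_{i₀}} ≥ 1 where u^h_{i₀} = u_{i₀} + log((1−|z_{i₀}|²)/(1−|z'_{i₀}|²)). -/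
open Real

/-! The conformal relation `l' = e^{(u_{i₀}+u_{j₁})/2} l` gives `e^{u_{i₀}} = (l'/l) e^{(u_{i₀}-u_{j₁})/2}`.
Bounding `l' ≥ 1 - |z'_{i₀}|` (as `|z'_{j₁}| ≥ 1`), the exponential by `sin² ε`, `1 - |z_{i₀}|² ≥ 1/2`
and `(1 - |z'_{i₀}|)/(1 - |z'_{i₀}|²) = 1/(1 + |z'_{i₀}|) ≥ 1/2 ≥ sin ε` yields
`e^{u^h_{i₀}} ≥ sin³ ε / (2 l)`, which is at least `1` because `l ≤ 2r = sin³ ε / 2`. -/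

lemma one_sub_norm_le_dist_of_one_le_norm {E : Type*} [SeminormedAddCommGroup E] {z w : E}
    (hw : 1 ≤ ‖w‖) : 1 - ‖z‖ ≤ dist z w := by
  have := norm_sub_norm_le w z
  rw [dist_comm, dist_eq_norm]
  linarith

lemma half_le_one_sub_div_one_sub_sq {a : ℝ} (ha₀ : 0 ≤ a) (ha₁ : a < 1) :
    1 / 2 ≤ (1 - a) / (1 - a ^ 2) := by
  have hfactor : 1 - a ^ 2 = (1 - a) * (1 + a) := by ring
  rw [hfactor, div_mul_cancel_left₀ (by linarith), one_div]
  exact inv_anti₀ (by linarith) (by linarith)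

lemma exp_eq_div_mul_exp_half_sub {u v l l' : ℝ} (hl : 0 < l) (hconf : l' = exp ((u + v) / 2) * l) :
    exp u = l' / l * exp ((u - v) / 2) := by
  rw [hconf, mul_div_cancel_right₀ _ hl.ne', ← exp_add]
  ring_nf

theorem stmt18_general (ε r : ℝ) (zi0 zj1 zi0' zj1' : ℂ) (ui0 uj1 : ℝ)
    (hsin : Real.sin ε ≤ 1 / 2) (hsinpos : 0 < Real.sin ε)
    (hr : r = Real.sin ε ^ 3 / 4)
    (hzi0' : ‖zi0'‖ < 1) (hzj1' : 1 ≤ ‖zj1'‖)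
    (hconf : dist zi0' zj1' = Real.exp ((ui0 + uj1) / 2) * dist zi0 zj1)
    (hgrad : ui0 ≤ uj1 → Real.sin ε ^ 2 ≤ Real.exp ((ui0 - uj1) / 2))
    (hu : ui0 ≤ uj1)
    (hzi0 : ‖zi0‖ ≤ 1 / 2)
    (hl : dist zi0 zj1 ≤ 2 * r) (hlpos : 0 < dist zi0 zj1) :
    1 ≤ Real.exp (ui0 +
      Real.log ((1 - ‖zi0‖ ^ 2) / (1 - ‖zi0'‖ ^ 2))) := by
  set s := sin ε
  set l := dist zi0 zj1
  have hnum : 1 / 2 ≤ 1 - ‖zi0‖ ^ 2 := by nlinarith [norm_nonneg zi0]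
  have hden : 0 < 1 - ‖zi0'‖ ^ 2 := by nlinarith [norm_nonneg zi0']
  have hshrink : s ≤ (1 - ‖zi0'‖) / (1 - ‖zi0'‖ ^ 2) :=
    hsin.trans (half_le_one_sub_div_one_sub_sq (norm_nonneg _) hzi0')
  rw [exp_add, exp_log (by positivity), exp_eq_div_mul_exp_half_sub hlpos hconf]
  calc 1 ≤ s ^ 2 * (1 / 2) / l * s := by
        rw [div_mul_eq_mul_div, le_div_iff₀ hlpos]
        linarith
    _ ≤ s ^ 2 * (1 - ‖zi0‖ ^ 2) / l * ((1 - ‖zi0'‖) / (1 - ‖zi0'‖ ^ 2)) := by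
        gcongr
    _ = (1 - ‖zi0'‖) / l * s ^ 2 * ((1 - ‖zi0‖ ^ 2) / (1 - ‖zi0'‖ ^ 2)) := by ring
    _ ≤ dist zi0' zj1' / l * exp ((ui0 - uj1) / 2) * ((1 - ‖zi0‖ ^ 2) / (1 - ‖zi0'‖ ^ 2)) := by
        gcongr
        · exact one_sub_norm_le_dist_of_one_le_norm hzj1'
        · exact hgrad hu

/-- boundary vertex estimate: let `i₀` be a vertex with
`z'_{i₀} = φ'(i₀) ∈ D₁` having a neighbor `j₁` with `|φ'(j₁)| ≥ 1`, so
`l'_{i₀j₁} ≥ 1 − |z'_{i₀}|`. Assuming the gradient estimate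
`e^{(u_{i₀}−u_{j₁})/2} ≥ sin²ε` (valid when `u_{i₀} ≤ u_{j₁}`, from the
uniformly nondegenerate condition on the triangle containing the edge),
`sin ε ≤ 1/2`, `|z_{i₀}| ≤ 1/2`, `l_{i₀j₁} ≤ 2r` with `r = sin³ε/4`, and
`u_{i₀} ≤ u_{j₁}`, then `e^{u^h_{i₀}} ≥ 1`, where
`u^h_{i₀} = u_{i₀} + log((1−|z_{i₀}|²)/(1−|z'_{i₀}|²))`. -/
theorem stmt18 (ε r : ℝ) (zi0 zj1 zi0' zj1' : ℂ) (ui0 uj1 : ℝ)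
    (hε : 0 < ε) (hsin : Real.sin ε ≤ 1 / 2) (hsinpos : 0 < Real.sin ε)
    (hr : r = Real.sin ε ^ 3 / 4)
    (hzi0' : ‖zi0'‖ < 1) (hzj1' : 1 ≤ ‖zj1'‖)
    (hconf : dist zi0' zj1' = Real.exp ((ui0 + uj1) / 2) * dist zi0 zj1)
    (hgrad : ui0 ≤ uj1 → Real.sin ε ^ 2 ≤ Real.exp ((ui0 - uj1) / 2))
    (hu : ui0 ≤ uj1)
    (hzi0 : ‖zi0‖ ≤ 1 / 2)
    (hl : dist zi0 zj1 ≤ 2 * r) (hlpos : 0 < dist zi0 zj1) :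
    1 ≤ Real.exp (ui0 +
      Real.log ((1 - ‖zi0‖ ^ 2) / (1 - ‖zi0'‖ ^ 2))) :=
  stmt18_general ε r zi0 zj1 zi0' zj1' ui0 uj1 hsin hsinpos hr hzi0' hzj1' hconf hgrad hu hzi0 hl
    hlpos
end
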